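/- arXiv:2502.09741 — 2 statements merged into one kernel-verified Lean document; each statement's English description precedes it below -/
import Mathlib

section
/- FoNE decoding correctness: let x be a natural number with x < 10^m and let d_i denote its i-th least significant digit. Suppose the hidden state h ∈ ℝ^(2m) satisfies (h[2i-1], h[2i]) = φ(d_i, 10) for each i = 1,...,m (1-indexed pairs). Then the Fourier Number Final Prediction ŷ = ∑_{i=1}^m (argmax_{j∈{0,...,9}} ⟨(h[2i-1], h[2i]), φ(j,10)⟩)·10^(i-1) equals x. -/
/-- Circular embedding φ(x, T) = (cos(2πx/T), sin(2πx/T)). -/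
noncomputable def phi (x T : ℝ) : ℝ × ℝ :=
  (Real.cos (2 * Real.pi / T * x), Real.sin (2 * Real.pi / T * x))

def dot (p q : ℝ × ℝ) : ℝ := p.1 * q.1 + p.2 * q.2

/-!
The inner product of two circular embeddings is `cos (2π/T · (a - b))`, which equals its
maximum `1` only when `a - b` is a multiple of `T`. Two digits in `{0, …, n-1}` differ by less
than `n`, so the maximizer of `⟨φ(d, n), φ(j, n)⟩` over digits `j` is `d` itself: argmax decoding
recovers every digit, and the decimal expansion reassembles `x`.
-/

open Real Finset

lemma dot_phi_phi (a b T : ℝ) : dot (phi a T) (phi b T) = cos (2 * π / T * (a - b)) := by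
  simp only [dot, phi, mul_sub, cos_sub]

lemma dot_phi_self (a T : ℝ) : dot (phi a T) (phi a T) = 1 := by
  rw [dot_phi_phi, sub_self, mul_zero, cos_zero]

lemma eq_of_dot_phi_self_le {n d j : ℕ} (hd : d < n) (hj : j < n)
    (hle : dot (phi d n) (phi d n) ≤ dot (phi d n) (phi j n)) : j = d := by
  have hn : (0 : ℝ) < n := Nat.cast_pos.mpr (Nat.zero_lt_of_lt hd)
  have hcos : cos (2 * π / n * ((d : ℝ) - j)) = 1 := by
    rw [dot_phi_self, dot_phi_phi] at hle
    exact le_antisymm (cos_le_one _) hle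
  have hdiff : |(d : ℝ) - j| < n := by
    have : |(d : ℤ) - j| < n := by rw [abs_sub_lt_iff]; omega
    exact_mod_cast this
  have hangle : |2 * π / n * ((d : ℝ) - j)| < 2 * π := by
    rw [abs_mul, abs_of_pos (by positivity), div_mul_eq_mul_div, div_lt_iff₀ hn]
    exact mul_lt_mul_of_pos_left hdiff (by positivity)
  rw [cos_eq_one_iff_of_lt_of_lt (abs_lt.mp hangle).1 (abs_lt.mp hangle).2] at hcos
  have hdj : (d : ℝ) = j := by
    rcases mul_eq_zero.mp hcos with h | h
    · exact absurd h (by positivity)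
    · linarith
  exact_mod_cast hdj.symm

lemma sum_range_digit_mul_pow (b x n : ℕ) :
    ∑ i ∈ range n, x / b ^ i % b * b ^ i = x % b ^ n := by
  induction n with
  | zero => simp [Nat.mod_one]
  | succ k ih =>
    rw [sum_range_succ, ih, Nat.mod_pow_succ]
    ring

theorem fone_decoding_correct_general (m : ℕ) (x : ℕ) (hx : x < 10 ^ m)
    (h : ℕ → ℝ)
    (hh : ∀ i : ℕ, 1 ≤ i → i ≤ m →
      (h (2 * i - 1), h (2 * i)) = phi ((x / 10 ^ (i - 1) % 10 : ℕ) : ℝ) 10)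
    (g : ℕ → ℕ)
    (hg : ∀ i : ℕ, 1 ≤ i → i ≤ m → g i ≤ 9 ∧
      ∀ j : ℕ, j ≤ 9 →
        dot (h (2 * i - 1), h (2 * i)) (phi (j : ℝ) 10) ≤
        dot (h (2 * i - 1), h (2 * i)) (phi ((g i : ℕ) : ℝ) 10)) :
    ∑ i ∈ Finset.range m, g (i + 1) * 10 ^ i = x := by
  have hdecode : ∀ i ∈ range m, g (i + 1) = x / 10 ^ i % 10 := by
    intro i hi
    have him : i + 1 ≤ m := mem_range.mp hi
    obtain ⟨hg9, hmax⟩ := hg (i + 1) (Nat.le_add_left 1 i) him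
    have hdigit : x / 10 ^ i % 10 < 10 := Nat.mod_lt _ (by norm_num)
    have hle := hmax _ (Nat.le_of_lt_succ hdigit)
    rw [hh (i + 1) (Nat.le_add_left 1 i) him, Nat.add_sub_cancel] at hle
    exact eq_of_dot_phi_self_le (n := 10) hdigit (Nat.lt_succ_of_le hg9) (by exact_mod_cast hle)
  rw [sum_congr rfl fun i hi => by rw [hdecode i hi], sum_range_digit_mul_pow,
    Nat.mod_eq_of_lt hx]

/-- FoNE decoding correctness: if the hidden state carries the circular embedding of
each digit of `x`, then digit-wise argmax decoding reconstructs `x`. The decoder is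
modeled as any function `g` that picks, for each position, a maximizer of the inner
product with the digit embeddings. -/
theorem fone_decoding_correct (m : ℕ) (hm : 1 ≤ m) (x : ℕ) (hx : x < 10 ^ m)
    (h : ℕ → ℝ)
    (hh : ∀ i : ℕ, 1 ≤ i → i ≤ m →
      (h (2 * i - 1), h (2 * i)) = phi ((x / 10 ^ (i - 1) % 10 : ℕ) : ℝ) 10)
    (g : ℕ → ℕ)
    (hg : ∀ i : ℕ, 1 ≤ i → i ≤ m → g i ≤ 9 ∧
      ∀ j : ℕ, j ≤ 9 →
        dot (h (2 * i - 1), h (2 * i)) (phi (j : ℝ) 10) ≤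
        dot (h (2 * i - 1), h (2 * i)) (phi ((g i : ℕ) : ℝ) 10)) :
    ∑ i ∈ Finset.range m, g (i + 1) * 10 ^ i = x :=
  fone_decoding_correct_general m x hx h hh g hg
end

section
/- Chunked FoNE injectivity: fix chunk size k ≥ 1 and number of chunks c ≥ 1. For a natural number x < 10^(kc), write x in base 10^k as chunks x_1, ..., x_c (each in {0, ..., 10^k − 1}). If two numbers x, y < 10^(kc) have equal chunked embeddings, i.e., φ(x_j, 10^i) = φ(y_j, 10^i) for all chunks j = 1,...,c and all i = 1,...,k, then x = y. -/
/-- The j-th base-10^k chunk (1-indexed) of a natural number. -/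
def chunk (k x j : ℕ) : ℕ := x / 10 ^ (k * (j - 1)) % 10 ^ k

lemma phi_inj {a b T : ℕ} (hT : 0 < T) (ha : a < T) (hb : b < T)
    (h : phi (a : ℝ) (T : ℝ) = phi (b : ℝ) (T : ℝ)) : a = b := by
  have hT' : (0 : ℝ) < T := by exact_mod_cast hT
  have h1 := congrArg Prod.fst h
  have h2 := congrArg Prod.snd h
  simp only [phi] at h1 h2
  have := Real.Angle.cos_sin_inj h1 h2
  rw [Real.Angle.angle_eq_iff_two_pi_dvd_sub] at this
  obtain ⟨n, hn⟩ := this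
  have hpi := Real.pi_pos
  have key : (a : ℝ) - b = n * T := by
    have hne : (2 * Real.pi / T) ≠ 0 := by positivity
    field_simp at hn
    -- hn : 2π * a - 2π * b = 2π * n * T  (some form)
    nlinarith [hn]
  have ha' : (a : ℝ) < T := by exact_mod_cast ha
  have hb' : (b : ℝ) < T := by exact_mod_cast hb
  have ha0 : (0 : ℝ) ≤ a := Nat.cast_nonneg a
  have hb0 : (0 : ℝ) ≤ b := Nat.cast_nonneg b
  have habs : |(a : ℝ) - b| < T := by
    rw [abs_sub_lt_iff]
    constructor <;> linarith
  rw [key] at habs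
  have : n = 0 := by
    by_contra hn0
    have : (1 : ℝ) ≤ |(n : ℝ)| := by
      exact_mod_cast Int.one_le_abs (by exact_mod_cast hn0)
    rw [abs_mul, abs_of_pos hT'] at habs
    nlinarith
  rw [this] at key
  simp at key
  exact_mod_cast sub_eq_zero.mp key

lemma digits_eq {B : ℕ} (hB : 0 < B) :
    ∀ c x y : ℕ, x < B ^ c → y < B ^ c →
      (∀ j < c, x / B ^ j % B = y / B ^ j % B) → x = y := by
  intro c
  induction c with
  | zero => intro x y hx hy _; simp at hx hy; omega
  | succ n ih =>
    intro x y hx hy hj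
    have h0 := hj 0 (Nat.succ_pos n)
    simp at h0
    have hdiv : x / B = y / B := by
      apply ih
      · exact Nat.div_lt_of_lt_mul (by rw [← pow_succ']; exact hx)
      · exact Nat.div_lt_of_lt_mul (by rw [← pow_succ']; exact hy)
      · intro j hjn
        have := hj (j + 1) (by omega)
        simpa [Nat.div_div_eq_div_mul, pow_succ'] using this
    calc x = B * (x / B) + x % B := (Nat.div_add_mod x B).symm
    _ = B * (y / B) + y % B := by rw [hdiv, h0]
    _ = y := Nat.div_add_mod y B

theorem chunked_fone_injective (k c : ℕ) (hk : 1 ≤ k) (hc : 1 ≤ c)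
    (x y : ℕ) (hx : x < 10 ^ (k * c)) (hy : y < 10 ^ (k * c))
    (h : ∀ j : ℕ, 1 ≤ j → j ≤ c → ∀ i : ℕ, 1 ≤ i → i ≤ k →
      phi ((chunk k x j : ℕ) : ℝ) ((10 : ℝ) ^ i) =
      phi ((chunk k y j : ℕ) : ℝ) ((10 : ℝ) ^ i)) :
    x = y := by
  have hB : 0 < 10 ^ k := Nat.pow_pos (by norm_num)
  apply digits_eq hB c x y
  · rw [← pow_mul]; exact hx
  · rw [← pow_mul]; exact hy
  · intro j hjc
    have hphi := h (j + 1) (by omega) (by omega) k hk le_rfl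
    have hch : chunk k x (j + 1) = chunk k y (j + 1) := by
      apply phi_inj hB (Nat.mod_lt _ hB) (Nat.mod_lt _ hB)
      simpa [Nat.cast_pow, chunk] using hphi
    simpa [chunk, pow_mul] using hch
end
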